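/- arXiv:1210.7347 — 5 statements merged into one kernel-verified Lean document; each statement's English description precedes it below -/
import Mathlib

section
/- Let A ⊆ ℕ+ be nonempty and let d = gcd(A). In the graph on ℤ with edges {n, n-k} for k ∈ A, two integers m and n lie in the same connected component if and only if m ≡ n (mod d). -/
/-! Walks in this graph are exactly sums of elements of `±A`, so `m` and `n` are connected iff
`m - n` lies in the additive subgroup generated by `A`. That subgroup is cyclic, say `gℤ`; then
`|g|` is a common divisor of `A`, so it divides `d`, while `d` divides every element of it. -/

section AddCommGroup

variable {G : Type*} [AddCommGroup G] {s : Set G}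

theorem AddSubgroup.reflTransGen_sub_mem_iff_sub_mem_closure {m n : G} :
    Relation.ReflTransGen (fun a b => a - b ∈ s ∨ b - a ∈ s) m n ↔
      m - n ∈ AddSubgroup.closure s := by
  constructor
  · intro h
    induction h with
    | refl => simp
    | @tail b c _ hbc ih =>
      have hstep : b - c ∈ AddSubgroup.closure s := by
        rcases hbc with hbc | hcb
        · exact AddSubgroup.subset_closure hbc
        · simpa using AddSubgroup.neg_mem _ (AddSubgroup.subset_closure hcb)
      simpa using AddSubgroup.add_mem _ ih hstep
  · intro h
    suffices ∀ x ∈ AddSubgroup.closure s, ∀ m : G,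
        Relation.ReflTransGen (fun a b => a - b ∈ s ∨ b - a ∈ s) m (m - x) by
      simpa using this (m - n) h m
    intro x hx
    induction hx using AddSubgroup.closure_induction_left with
    | zero => exact fun m => by simpa using Relation.ReflTransGen.refl
    | add_left x hx y _ ih =>
      intro m
      refine .head (Or.inl ?_) (by simpa [sub_add_eq_sub_sub] using ih (m - x))
      simpa using hx
    | neg_add_cancel x hx y _ ih =>
      intro m
      refine .head (Or.inr ?_) (by simpa [sub_add_eq_sub_sub] using ih (m + x))
      simpa using hx

end AddCommGroup

theorem Int.natAbs_mem_iff {A : Set ℕ} {x : ℤ} :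
    x.natAbs ∈ A ↔ x ∈ ((↑) '' A : Set ℤ) ∨ -x ∈ ((↑) '' A : Set ℤ) := by
  constructor
  · intro hx
    rcases Int.natAbs_eq x with h | h
    · exact .inl ⟨_, hx, h.symm⟩
    · exact .inr ⟨_, hx, neg_eq_iff_eq_neg.mp h.symm⟩
  · rintro (⟨a, ha, rfl⟩ | ⟨a, ha, h⟩)
    · simpa using ha
    · simpa [← Int.natAbs_neg x, ← h] using ha

theorem Int.closure_natCast_image_eq_zmultiples {A : Set ℕ} {d : ℕ}
    (hd1 : ∀ a ∈ A, d ∣ a) (hd2 : ∀ e : ℕ, (∀ a ∈ A, e ∣ a) → e ∣ d) :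
    AddSubgroup.closure ((↑) '' A : Set ℤ) = AddSubgroup.zmultiples (d : ℤ) := by
  refine le_antisymm ?_ ?_
  · rw [AddSubgroup.closure_le]
    rintro _ ⟨a, ha, rfl⟩
    exact Int.mem_zmultiples_iff.mpr (Int.natCast_dvd_natCast.mpr (hd1 a ha))
  · obtain ⟨g, hg⟩ := Int.subgroup_cyclic (AddSubgroup.closure ((↑) '' A : Set ℤ))
    rw [← AddSubgroup.zmultiples_eq_closure] at hg
    have hg_dvd : ∀ a ∈ A, g.natAbs ∣ a := fun a ha => by
      have : (a : ℤ) ∈ AddSubgroup.zmultiples g := hg ▸ AddSubgroup.subset_closure ⟨a, ha, rfl⟩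
      exact Int.natAbs_dvd_natAbs.mpr (Int.mem_zmultiples_iff.mp this)
    rw [AddSubgroup.zmultiples_le, hg, Int.mem_zmultiples_iff]
    exact Int.natAbs_dvd.mp (Int.natCast_dvd_natCast.mpr (hd2 _ hg_dvd))

theorem graph_components_are_congruence_classes_general (A : Set ℕ) (d : ℕ)
    (hd1 : ∀ a ∈ A, d ∣ a) (hd2 : ∀ e : ℕ, (∀ a ∈ A, e ∣ a) → e ∣ d) :
    ∀ m n : ℤ,
      Relation.ReflTransGen (fun a b => (a - b).natAbs ∈ A) m n ↔ (d : ℤ) ∣ m - n := by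
  intro m n
  have hrel : (fun a b : ℤ => (a - b).natAbs ∈ A) =
      fun a b => a - b ∈ ((↑) '' A : Set ℤ) ∨ b - a ∈ ((↑) '' A : Set ℤ) := by
    funext a b
    rw [Int.natAbs_mem_iff, neg_sub]
  rw [hrel, AddSubgroup.reflTransGen_sub_mem_iff_sub_mem_closure,
    Int.closure_natCast_image_eq_zmultiples hd1 hd2, Int.mem_zmultiples_iff]

/-- Let `A ⊆ ℕ+` be nonempty with `gcd A = d`. In the graph on `ℤ` with edges
`{n, n-k}` for `k ∈ A`, two integers lie in the same connected component iff they
are congruent modulo `d`. -/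
theorem graph_components_are_congruence_classes (A : Set ℕ) (hA : A.Nonempty)
    (hpos : ∀ a ∈ A, 0 < a) (d : ℕ)
    (hd1 : ∀ a ∈ A, d ∣ a) (hd2 : ∀ e : ℕ, (∀ a ∈ A, e ∣ a) → e ∣ d) :
    ∀ m n : ℤ,
      Relation.ReflTransGen (fun a b => (a - b).natAbs ∈ A) m n ↔ (d : ℤ) ∣ m - n :=
  graph_components_are_congruence_classes_general A d hd1 hd2
end

section
/- Suppose gcd{k ∈ ℕ+ : θ_k ≠ 0} = 1 and either (a) θ_k ≥ 0 for all k, or (b) θ_k ≤ 0 for all odd k and θ_k ≥ 0 for all even k, with ∑|θ_k| = 1. Then there exists a configuration s ∈ {-1,1}^ℤ coherent with θ, and hence the Dirac measures δ_s and δ_{-s} are two distinct probability laws compatible with the kernel p^θ; in particular uniqueness fails. -/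
open MeasureTheory

/-- The linear transition kernel `p^θ(g | ω_{n-1}, ω_{n-2}, …)`. -/
noncomputable def transProb (θ : ℕ+ → ℝ) (g : ℝ) (n : ℤ) (ω : ℤ → ℝ) : ℝ :=
  1 / 2 + g / 2 * ∑' k : ℕ+, θ k * ω (n - (k : ℤ))

/-- The σ-algebra generated by the coordinates strictly before `n`. -/
def pastSigma (n : ℤ) : MeasurableSpace (ℤ → ℝ) :=
  MeasurableSpace.comap (fun ω (i : {i : ℤ // i < n}) => ω i.1) inferInstance

/-- A law `μ` on `{-1,1}^ℤ` is compatible with the kernel `p^θ`: the process takes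
values in `{-1,1}` and the conditional probability of `{ω n = g}` given the past
equals `p^θ(g | past)` a.s. -/
def IsCompatible (θ : ℕ+ → ℝ) (μ : Measure (ℤ → ℝ)) : Prop :=
  IsProbabilityMeasure μ ∧
    (∀ᵐ ω ∂μ, ∀ n : ℤ, ω n = 1 ∨ ω n = -1) ∧
    ∀ (n : ℤ) (g : ℝ), g = 1 ∨ g = -1 →
      μ[Set.indicator {ω : ℤ → ℝ | ω n = g} (fun _ => (1 : ℝ)) | pastSigma n]
        =ᵐ[μ] transProb θ g n

lemma dirac_null {s : ℤ → ℝ} {A B : Set (ℤ → ℝ)} (hAB : A ⊆ B)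
    (hB : MeasurableSet B) (hsB : s ∉ B) : Measure.dirac s A = 0 := by
  refine measure_mono_null hAB ?_
  rw [Measure.dirac_apply' s hB, Set.indicator_of_notMem hsB]

lemma pastSigma_le (n : ℤ) : pastSigma n ≤ (inferInstance : MeasurableSpace (ℤ → ℝ)) :=
  Measurable.comap_le (measurable_pi_lambda _ fun i => measurable_pi_apply i.1)


lemma measSet_coord (n : ℤ) (a : ℝ) : MeasurableSet {ω : ℤ → ℝ | ω n = a} :=
  measurableSet_eq_fun (measurable_pi_apply n) measurable_const

lemma key_sum (θ : ℕ+ → ℝ) (hsum : Summable fun k => |θ k|)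
    (htot : ∑' k : ℕ+, |θ k| = 1) (s : ℤ → ℝ) (hs : ∀ n, s n = 1 ∨ s n = -1)
    (hcoh : ∀ (n : ℤ) (k : ℕ+), θ k ≠ 0 → s n * s (n - (k : ℤ)) * θ k > 0) (n : ℤ) :
    ∑' k : ℕ+, θ k * s (n - (k : ℤ)) = s n := by
  have h : ∀ k : ℕ+, θ k * s (n - (k : ℤ)) = s n * |θ k| := by
    intro k
    by_cases hk : θ k = 0
    · simp [hk]
    · have hc := hcoh n k hk
      rcases hs n with h1 | h1 <;> rcases hs (n - (k : ℤ)) with h2 | h2 <;>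
        rw [h1, h2] at hc ⊢ <;>
        [rw [abs_of_pos (by linarith)]; rw [abs_of_neg (by linarith)];
         rw [abs_of_neg (by linarith)]; rw [abs_of_pos (by linarith)]] <;> ring
  rw [tsum_congr h, tsum_mul_left, htot, mul_one]

lemma coherent_compatible (θ : ℕ+ → ℝ) (hsum : Summable fun k => |θ k|)
    (htot : ∑' k : ℕ+, |θ k| = 1) (s : ℤ → ℝ) (hs : ∀ n, s n = 1 ∨ s n = -1)
    (hcoh : ∀ (n : ℤ) (k : ℕ+), θ k ≠ 0 → s n * s (n - (k : ℤ)) * θ k > 0) :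
    IsCompatible θ (Measure.dirac s) := by
  refine ⟨inferInstance, ?_, ?_⟩
  · rw [ae_iff]
    refine dirac_null (B := {ω : ℤ → ℝ | ∃ m : ℤ, ω m ≠ s m}) ?_ ?_ ?_
    · intro ω hω
      simp only [Set.mem_setOf_eq] at hω ⊢
      push_neg at hω
      obtain ⟨m, hm⟩ := hω
      exact ⟨m, fun h => by rcases hs m with h' | h' <;> simp [h, h'] at hm⟩
    · have : {ω : ℤ → ℝ | ∃ m : ℤ, ω m ≠ s m} = ⋃ m : ℤ, {ω : ℤ → ℝ | ω m = s m}ᶜ := by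
        ext ω; simp [Set.mem_setOf_eq]
      rw [this]
      exact MeasurableSet.iUnion fun m => (measSet_coord m (s m)).compl
    · simp
  · intro n g hg
    set c : ℝ := transProb θ g n s with hc
    -- transProb at s
    have hts : transProb θ g n s = 1 / 2 + g / 2 * s n := by
      rw [transProb, key_sum θ hsum htot s hs hcoh]
    -- indicator =ᵐ const c
    have hind : Set.indicator {ω : ℤ → ℝ | ω n = g} (fun _ => (1 : ℝ))
        =ᵐ[Measure.dirac s] fun _ => c := by
      rw [Filter.EventuallyEq, ae_iff]
      refine dirac_null (B := {ω : ℤ → ℝ | ω n ≠ s n}) ?_ ?_ (by simp)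
      · intro ω hω
        simp only [Set.mem_setOf_eq] at hω ⊢
        intro hωn
        apply hω
        rw [hc, hts]
        by_cases hsg : s n = g
        · rw [Set.indicator_of_mem (show ω ∈ {ω : ℤ → ℝ | ω n = g} by rw [Set.mem_setOf_eq, hωn, hsg]), hsg]
          rcases hg with h | h <;> rw [h] <;> norm_num
        · rw [Set.indicator_of_notMem (show ω ∉ {ω : ℤ → ℝ | ω n = g} by simp only [Set.mem_setOf_eq, hωn]; exact hsg)]
          rcases hg with h | h <;> rcases hs n with h' | h' <;>
            rw [h, h'] <;> first | (exact absurd (h'.trans h.symm) hsg) | norm_num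
      · exact (measSet_coord n (s n)).compl
    -- transProb =ᵐ const c
    have htp : (transProb θ g n : (ℤ → ℝ) → ℝ) =ᵐ[Measure.dirac s] fun _ => c := by
      rw [Filter.EventuallyEq, ae_iff]
      refine dirac_null (B := {ω : ℤ → ℝ | ∃ k : ℕ+, ω (n - (k : ℤ)) ≠ s (n - (k : ℤ))}) ?_ ?_
        (by simp)
      · intro ω hω
        simp only [Set.mem_setOf_eq] at hω ⊢
        by_contra h
        push_neg at h
        apply hω
        rw [hc]
        unfold transProb
        congr 2
        exact tsum_congr fun k => by rw [h k]
      · have : {ω : ℤ → ℝ | ∃ k : ℕ+, ω (n - (k : ℤ)) ≠ s (n - (k : ℤ))}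
            = ⋃ k : ℕ+, {ω : ℤ → ℝ | ω (n - (k : ℤ)) = s (n - (k : ℤ))}ᶜ := by
          ext ω; simp [Set.mem_setOf_eq]
        rw [this]
        exact MeasurableSet.iUnion fun k => (measSet_coord _ _).compl
    calc (Measure.dirac s)[Set.indicator {ω : ℤ → ℝ | ω n = g} (fun _ => (1 : ℝ)) |
          pastSigma n]
        =ᵐ[Measure.dirac s] (Measure.dirac s)[(fun _ => c) | pastSigma n] :=
          condExp_congr_ae hind
      _ =ᵐ[Measure.dirac s] fun _ => c := by
          rw [condExp_const (pastSigma_le n)]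
      _ =ᵐ[Measure.dirac s] transProb θ g n := htp.symm

/-- If `gcd {k : θ k ≠ 0} = 1` and either all `θ k ≥ 0`, or `θ k ≤ 0` for odd `k` and
`θ k ≥ 0` for even `k`, then a coherent configuration `s` exists and the Dirac measures
at `s` and `-s` are two distinct laws compatible with `p^θ`: uniqueness fails. -/
theorem nonuniqueness_of_coherent (θ : ℕ+ → ℝ)
    (hsum : Summable fun k => |θ k|) (htot : ∑' k : ℕ+, |θ k| = 1)
    (hgcd : ∀ d : ℕ, (∀ k : ℕ+, θ k ≠ 0 → d ∣ (k : ℕ)) → d = 1)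
    (hsign : (∀ k, 0 ≤ θ k) ∨
      ∀ k : ℕ+, (Odd (k : ℕ) → θ k ≤ 0) ∧ (Even (k : ℕ) → 0 ≤ θ k)) :
    ∃ s : ℤ → ℝ, (∀ n, s n = 1 ∨ s n = -1) ∧
      (∀ (n : ℤ) (k : ℕ+), θ k ≠ 0 → s n * s (n - (k : ℤ)) * θ k > 0) ∧
      IsCompatible θ (Measure.dirac s) ∧
      IsCompatible θ (Measure.dirac fun n => -s n) ∧
      Measure.dirac s ≠ Measure.dirac fun n => -s n := by
  -- choose s
  obtain ⟨s, hs, hcoh⟩ :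
      ∃ s : ℤ → ℝ, (∀ n, s n = 1 ∨ s n = -1) ∧
        ∀ (n : ℤ) (k : ℕ+), θ k ≠ 0 → s n * s (n - (k : ℤ)) * θ k > 0 := by
    rcases hsign with hpos | halt
    · refine ⟨fun _ => 1, fun _ => Or.inl rfl, fun n k hk => ?_⟩
      simp only [one_mul]
      exact lt_of_le_of_ne (hpos k) (Ne.symm hk)
    · refine ⟨fun m => (-1 : ℝ) ^ m, fun m => ?_, fun n k hk => ?_⟩
      · rcases Int.even_or_odd m with h | h
        · left; exact h.neg_one_zpow
        · right; exact h.neg_one_zpow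
      · show (-1 : ℝ) ^ n * (-1 : ℝ) ^ (n - (k : ℤ)) * θ k > 0
        have hkey : (-1 : ℝ) ^ n * (-1 : ℝ) ^ (n - (k : ℤ)) = (-1 : ℝ) ^ (k : ℤ) := by
          rw [← zpow_add₀ (by norm_num : (-1 : ℝ) ≠ 0)]
          have : n + (n - (k : ℤ)) = 2 * (n - (k:ℤ)) + (k : ℤ) := by ring
          rw [this, zpow_add₀ (by norm_num : (-1 : ℝ) ≠ 0), zpow_mul]
          norm_num
        rw [hkey]
        rcases Nat.even_or_odd (k : ℕ) with h | h
        · have : (-1 : ℝ) ^ (k : ℤ) = 1 := by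
            have : Even ((k : ℕ) : ℤ) := h.natCast
            exact this.neg_one_zpow
          rw [this, one_mul]
          exact lt_of_le_of_ne ((halt k).2 h) (Ne.symm hk)
        · have : (-1 : ℝ) ^ (k : ℤ) = -1 := by
            have : Odd ((k : ℕ) : ℤ) := h.natCast
            exact this.neg_one_zpow
          rw [this]
          have := (halt k).1 h
          have := lt_of_le_of_ne this hk
          linarith
  have hs' : ∀ n, -s n = 1 ∨ -s n = -1 := fun n => by
    rcases hs n with h | h <;> simp [h]
  have hcoh' : ∀ (n : ℤ) (k : ℕ+), θ k ≠ 0 → (-s n) * (-s (n - (k : ℤ))) * θ k > 0 := by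
    intro n k hk
    have := hcoh n k hk
    nlinarith
  refine ⟨s, hs, hcoh, coherent_compatible θ hsum htot s hs hcoh,
    coherent_compatible θ hsum htot _ hs' hcoh', ?_⟩
  intro h
  have hA : MeasurableSet {ω : ℤ → ℝ | ω 0 = s 0} := measSet_coord 0 (s 0)
  have h1 : Measure.dirac s {ω : ℤ → ℝ | ω 0 = s 0} = 1 := by
    rw [Measure.dirac_apply' _ hA, Set.indicator_of_mem (by simp)]; rfl
  have h2 : Measure.dirac (fun n => -s n) {ω : ℤ → ℝ | ω 0 = s 0} = 0 := by
    rw [Measure.dirac_apply' _ hA, Set.indicator_of_notMem]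
    rcases hs 0 with h' | h' <;> simp [Set.mem_setOf_eq, h'] <;> norm_num
  rw [h] at h1
  rw [h1] at h2
  exact one_ne_zero h2
end

section
/- Conversely, suppose every path (in the graph on ℤ with edges {n, n-k} for θ_k ≠ 0) joining any two given vertices has the same sign, where the sign of a path is the product of sign(θ_{|n_i - n_{i+1}|}) over its edges. Then there exists a configuration s ∈ {-1,1}^ℤ coherent with θ. -/
/-- Extension of `θ : ℕ+ → ℝ` to `ℕ`, vanishing at `0`. -/
noncomputable def thetaExt (θ : ℕ+ → ℝ) (m : ℕ) : ℝ :=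
  if h : 0 < m then θ ⟨m, h⟩ else 0

/-!
The graph of `θ` carries the edge weights `sign θ_k`. When all walks between two vertices have
the same weight product, fixing a base vertex in every connected component and letting `s n` be
the weight product of any walk from the base vertex to `n` is well defined; appending the edge
`{n - k, n}` to a walk ending at `n - k` gives `s n = s (n - k) · sign θ_k`, so that
`s n · s (n - k) · θ_k = |θ_k| > 0`.
-/

open Finset

namespace SimpleGraph

variable {V M : Type*} [CommMonoid M] {G : SimpleGraph V}

namespace Walk

def prodWeight (σ : V → V → M) {u v : V} (p : G.Walk u v) : M :=
  ∏ i ∈ range p.length, σ (p.getVert i) (p.getVert (i + 1))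

@[simp]
lemma prodWeight_copy (σ : V → V → M) {u v u' v' : V} (p : G.Walk u v) (hu : u = u')
    (hv : v = v') : (p.copy hu hv).prodWeight σ = p.prodWeight σ := by
  subst hu hv
  rfl

lemma prodWeight_concat (σ : V → V → M) {u v w : V} (p : G.Walk u v) (h : G.Adj v w) :
    (p.concat h).prodWeight σ = p.prodWeight σ * σ v w := by
  rw [prodWeight, length_concat, prod_range_succ, prodWeight]
  congr 1
  · refine prod_congr rfl fun i hi => ?_
    have hi : i < p.length := mem_range.1 hi
    simp only [concat_eq_append, getVert_append', hi.le, Nat.succ_le_of_lt hi, if_true]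
  · simp [concat_eq_append, getVert_append']

lemma prodWeight_eq_one_or_neg_one [HasDistribNeg M] {σ : V → V → M}
    (hσ : ∀ a b, G.Adj a b → σ a b = 1 ∨ σ a b = -1) {u v : V} (p : G.Walk u v) :
    p.prodWeight σ = 1 ∨ p.prodWeight σ = -1 :=
  prod_induction _ (fun x => x = 1 ∨ x = -1)
    (by rintro a b (rfl | rfl) (rfl | rfl) <;> simp) (Or.inl rfl)
    fun _ hi => hσ _ _ (p.adj_getVert_succ (mem_range.1 hi))

end Walk

theorem exists_potential_of_prodWeight_eq (σ : V → V → M)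
    (hσ : ∀ u v (p q : G.Walk u v), p.prodWeight σ = q.prodWeight σ) :
    ∃ s : V → M, (∀ v, ∃ u, ∃ p : G.Walk u v, s v = p.prodWeight σ) ∧
      ∀ u v, G.Adj u v → s v = s u * σ u v := by
  let base (v : V) : V := (G.connectedComponentMk v).out
  have hbase (v : V) : G.Reachable (base v) v :=
    ConnectedComponent.exact (G.connectedComponentMk v).out_eq
  refine ⟨fun v => (hbase v).some.prodWeight σ, fun v => ⟨_, _, rfl⟩, fun u v h => ?_⟩
  have hbase_eq : base u = base v := by
    simp only [base, ConnectedComponent.connectedComponentMk_eq_of_adj h]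
  change (hbase v).some.prodWeight σ = (hbase u).some.prodWeight σ * σ u v
  rw [hσ _ _ _ (((hbase u).some.concat h).copy hbase_eq rfl), Walk.prodWeight_copy,
    Walk.prodWeight_concat]

end SimpleGraph

lemma thetaExt_coe (θ : ℕ+ → ℝ) (k : ℕ+) : thetaExt θ k = θ k := by
  simp only [thetaExt, dif_pos k.pos]
  rfl

def thetaGraph (θ : ℕ+ → ℝ) : SimpleGraph ℤ where
  Adj a b := thetaExt θ (a - b).natAbs ≠ 0
  symm := ⟨fun a b h => by rwa [← Int.natAbs_neg, neg_sub]⟩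
  loopless := ⟨fun a h => h (by simp [thetaExt])⟩

/-- If every pair of paths with common endpoints in the graph of `θ` has the same sign,
then a configuration coherent with `θ` exists. -/
theorem coherent_of_path_signs (θ : ℕ+ → ℝ)
    (hpaths : ∀ (l₁ l₂ : ℕ) (n₁ n₂ : ℕ → ℤ),
      (∀ i < l₁, thetaExt θ ((n₁ i - n₁ (i + 1)).natAbs) ≠ 0) →
      (∀ i < l₂, thetaExt θ ((n₂ i - n₂ (i + 1)).natAbs) ≠ 0) →
      n₁ 0 = n₂ 0 → n₁ l₁ = n₂ l₂ →
      ∏ i ∈ Finset.range l₁, Real.sign (thetaExt θ ((n₁ i - n₁ (i + 1)).natAbs))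
        = ∏ i ∈ Finset.range l₂, Real.sign (thetaExt θ ((n₂ i - n₂ (i + 1)).natAbs))) :
    ∃ s : ℤ → ℝ, (∀ n, s n = 1 ∨ s n = -1) ∧
      ∀ (n : ℤ) (k : ℕ+), θ k ≠ 0 → s n * s (n - (k : ℤ)) * θ k > 0 := by
  obtain ⟨s, hs_walk, hs_adj⟩ := (thetaGraph θ).exists_potential_of_prodWeight_eq
    (fun a b => Real.sign (thetaExt θ (a - b).natAbs))
    fun u v p q => hpaths _ _ _ _ (fun _ hi => p.adj_getVert_succ hi)
      (fun _ hi => q.adj_getVert_succ hi) (by simp) (by simp)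
  have hs_sign (n : ℤ) : s n = 1 ∨ s n = -1 := by
    obtain ⟨_, p, hp⟩ := hs_walk n
    rw [hp]
    exact p.prodWeight_eq_one_or_neg_one fun a b h => (Real.sign_apply_eq_of_ne_zero _ h).symm
  refine ⟨s, hs_sign, fun n k hk => ?_⟩
  have hadj : (thetaGraph θ).Adj (n - k) n := by simpa [thetaGraph, thetaExt_coe] using hk
  rw [hs_adj _ _ hadj, sub_sub_cancel_left, Int.natAbs_neg, Int.natAbs_natCast, thetaExt_coe]
  have hθ := Real.sign_mul_pos_of_ne_zero _ hk
  rcases hs_sign (n - k) with h | h <;> rw [h] <;> linarith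
end

section
/- Let {K_n}_{n∈ℤ} be i.i.d. ℕ+-valued random variables and consider the random graph on ℤ with edge set {{n, n − K_n} : n ∈ ℤ}. The number N of connected components of this graph is measurable with respect to the left tail σ-algebra ⋂_m σ(K_i : i ≤ m), and hence N is almost surely constant. -/
/-!
Every vertex `n` has exactly one outgoing arc, to `n - K n < n`, so two vertices are connected
iff their forward orbits meet, and every component reaches `(-∞, m]` for each `m`. Moreover,
orbits starting in `(-∞, m]` never leave it. Hence the components are in bijection with the
classes of the orbit relation on `(-∞, m]`, which only involves `K i` for `i ≤ m`: the number
of components is measurable for the past σ-algebra at every level `m`, hence for the tail, and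
Kolmogorov's zero-one law makes it almost surely constant.
-/

open MeasureTheory ProbabilityTheory

/-- Edge relation of the random graph on `ℤ`: an arc from `a` to `a - κ a`. -/
def graphRel (κ : ℤ → ℕ) : ℤ → ℤ → Prop := fun a b => b = a - (κ a : ℤ)

/-- Number of connected components (in `ℕ∞`) of the graph on `ℤ` with edges
`{a, a - κ a}`. -/
noncomputable def numComp (κ : ℤ → ℕ) : ℕ∞ :=
  Cardinal.toENat (Cardinal.mk (Quot (Relation.EqvGen (graphRel κ))))

/-- The left tail σ-algebra of the family `K`. -/
def tailSigma {Ω : Type*} [MeasurableSpace Ω] (K : ℤ → Ω → ℕ) : MeasurableSpace Ω :=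
  ⨅ m : ℤ, ⨆ i : {i : ℤ // i ≤ m}, MeasurableSpace.comap (K i.1) inferInstance

open Filter Cardinal

theorem Relation.eqvGen_graph_iff {α : Type*} (f : α → α) {a b : α} :
    EqvGen (fun x y => y = f x) a b ↔ ∃ i j, f^[i] a = f^[j] b := by
  constructor
  · intro h
    induction h with
    | rel x y hxy => exact ⟨1, 0, by simp [hxy]⟩
    | refl x => exact ⟨0, 0, rfl⟩
    | symm x y _ ih =>
      obtain ⟨i, j, h⟩ := ih
      exact ⟨j, i, h.symm⟩
    | trans x y z _ _ ih₁ ih₂ =>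
      obtain ⟨i, j, h₁⟩ := ih₁
      obtain ⟨k, l, h₂⟩ := ih₂
      refine ⟨k + i, j + l, ?_⟩
      rw [Function.iterate_add_apply, h₁, ← Function.iterate_add_apply, Nat.add_comm k j,
        Function.iterate_add_apply, h₂, ← Function.iterate_add_apply]
  · rintro ⟨i, j, h⟩
    have to_iterate : ∀ n x, EqvGen (fun x y => y = f x) x (f^[n] x) := by
      intro n
      induction n with
      | zero => exact EqvGen.refl
      | succ n ih =>
        intro x
        rw [Function.iterate_succ_apply']
        exact (ih x).trans _ _ _ (.rel _ _ rfl)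
    exact (to_iterate i a).trans _ _ _ (h ▸ (to_iterate j b).symm)

theorem Setoid.mk_quotient_comap_val {α : Type*} (r : Setoid α) {s : Set α}
    (hs : ∀ a, ∃ b ∈ s, r a b) : #(Quotient (r.comap ((↑) : s → α))) = #(Quotient r) := by
  have hsurj : Function.Surjective (@Quotient.mk'' _ r ∘ ((↑) : s → α)) := by
    rintro ⟨a⟩
    obtain ⟨b, hb, hab⟩ := hs a
    exact ⟨⟨b, hb⟩, Quotient.sound (r.symm hab)⟩
  rw [mk_congr (Setoid.comapQuotientEquiv _ r), hsurj.range_eq, mk_univ]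

theorem Setoid.natCast_le_toENat_mk_quotient_iff {α : Type*} (r : Setoid α) (k : ℕ) :
    (k : ℕ∞) ≤ toENat #(Quotient r) ↔ ∃ f : Fin k → α, Pairwise fun p q => ¬ r (f p) (f q) := by
  rw [natCast_le_toENat, ← lift_mk_fin, ← lift_uzero #(Quotient r), lift_mk_le']
  constructor
  · rintro ⟨e⟩
    refine ⟨fun p => (e p).out, fun p q hpq hr => hpq (e.injective ?_)⟩
    rw [← Quotient.out_eq (e p), ← Quotient.out_eq (e q)]
    exact Quotient.sound hr
  · rintro ⟨f, hf⟩
    exact ⟨⟨fun p => ⟦f p⟧, fun p q h => by_contra fun hpq => hf hpq (Quotient.exact h)⟩⟩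

def arcTarget (κ : ℤ → ℕ) (a : ℤ) : ℤ := a - κ a

theorem eqvGen_graphRel_iff (κ : ℤ → ℕ) {a b : ℤ} :
    Relation.EqvGen (graphRel κ) a b ↔ ∃ i j, (arcTarget κ)^[i] a = (arcTarget κ)^[j] b :=
  Relation.eqvGen_graph_iff (arcTarget κ)

theorem arcTarget_iterate_le (κ : ℤ → ℕ) (i : ℕ) (a : ℤ) : (arcTarget κ)^[i] a ≤ a := by
  induction i with
  | zero => rfl
  | succ i ih =>
    rw [Function.iterate_succ_apply', arcTarget]
    omega

theorem arcTarget_iterate_le_sub {κ : ℤ → ℕ} (hκ : ∀ n, 0 < κ n) (i : ℕ) (a : ℤ) :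
    (arcTarget κ)^[i] a ≤ a - i := by
  induction i with
  | zero => simp
  | succ i ih =>
    have := hκ ((arcTarget κ)^[i] a)
    rw [Function.iterate_succ_apply', arcTarget]
    omega

theorem arcTarget_iterate_congr {κ κ' : ℤ → ℕ} {m a : ℤ} (h : ∀ n ≤ m, κ n = κ' n) (ha : a ≤ m)
    (i : ℕ) : (arcTarget κ)^[i] a = (arcTarget κ')^[i] a := by
  induction i with
  | zero => rfl
  | succ i ih =>
    rw [Function.iterate_succ_apply', Function.iterate_succ_apply', arcTarget, arcTarget, ← ih,
      h _ ((arcTarget_iterate_le κ i a).trans ha)]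

theorem exists_eqvGen_graphRel_le {κ : ℤ → ℕ} (hκ : ∀ n, 0 < κ n) (m a : ℤ) :
    ∃ b ≤ m, Relation.EqvGen (graphRel κ) a b := by
  refine ⟨(arcTarget κ)^[(a - m).toNat] a, ?_, (eqvGen_graphRel_iff κ).2 ⟨_, 0, rfl⟩⟩
  have := arcTarget_iterate_le_sub hκ (a - m).toNat a
  omega

theorem numComp_eq_toENat_mk_quotient_comap {κ : ℤ → ℕ} (hκ : ∀ n, 0 < κ n) (m : ℤ) :
    numComp κ =
      toENat #(Quotient ((Relation.EqvGen.setoid (graphRel κ)).comap ((↑) : Set.Iic m → ℤ))) :=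
  (congrArg toENat (Setoid.mk_quotient_comap_val (Relation.EqvGen.setoid (graphRel κ))
    (s := Set.Iic m) (exists_eqvGen_graphRel_le hκ m))).symm

theorem numComp_congr {κ κ' : ℤ → ℕ} (hκ : ∀ n, 0 < κ n) (hκ' : ∀ n, 0 < κ' n) (m : ℤ)
    (h : ∀ n ≤ m, κ n = κ' n) : numComp κ = numComp κ' := by
  have hcomap : (Relation.EqvGen.setoid (graphRel κ)).comap ((↑) : Set.Iic m → ℤ) =
      (Relation.EqvGen.setoid (graphRel κ')).comap ((↑) : Set.Iic m → ℤ) := by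
    ext a b
    change Relation.EqvGen _ _ _ ↔ Relation.EqvGen _ _ _
    simp only [eqvGen_graphRel_iff, arcTarget_iterate_congr h a.2, arcTarget_iterate_congr h b.2]
  rw [numComp_eq_toENat_mk_quotient_comap hκ m, numComp_eq_toENat_mk_quotient_comap hκ' m, hcomap]

theorem natCast_le_numComp_iff (κ : ℤ → ℕ) (k : ℕ) :
    (k : ℕ∞) ≤ numComp κ ↔
      ∃ f : Fin k → ℤ, Pairwise fun p q => ¬ Relation.EqvGen (graphRel κ) (f p) (f q) :=
  Setoid.natCast_le_toENat_mk_quotient_iff (Relation.EqvGen.setoid (graphRel κ)) k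

theorem measurable_arcTarget_iterate (i : ℕ) (a : ℤ) :
    Measurable fun κ : ℤ → ℕ => (arcTarget κ)^[i] a := by
  have harc : Measurable fun p : (ℤ → ℕ) × ℤ => arcTarget p.1 p.2 :=
    measurable_from_prod_countable_left fun b =>
      (Measurable.of_discrete (f := fun n : ℕ => b - (n : ℤ))).comp (measurable_pi_apply b)
  induction i with
  | zero => exact measurable_const
  | succ i ih =>
    simp only [Function.iterate_succ_apply']
    exact harc.comp (measurable_id.prodMk ih)

theorem measurable_eqvGen_graphRel (a b : ℤ) :
    Measurable fun κ => Relation.EqvGen (graphRel κ) a b := by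
  simp only [eqvGen_graphRel_iff]
  exact .exists fun i => .exists fun j =>
    (measurable_arcTarget_iterate i a).eq (measurable_arcTarget_iterate j b)

theorem measurable_numComp : Measurable numComp := by
  have hle (k : ℕ) : MeasurableSet {κ | (k : ℕ∞) ≤ numComp κ} := by
    simp only [natCast_le_numComp_iff]
    exact (Measurable.exists fun f : Fin k → ℤ => Measurable.forall fun p =>
      Measurable.forall fun q =>
        measurable_const.imp (measurable_eqvGen_graphRel (f p) (f q)).not).setOf
  refine ENat.measurable_iff.2 fun n => ?_
  have hlevel : numComp ⁻¹' {(n : ℕ∞)} =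
      {κ | (n : ℕ∞) ≤ numComp κ} \ {κ | ((n + 1 : ℕ) : ℕ∞) ≤ numComp κ} := by
    ext κ
    simp [le_antisymm_iff, and_comm, ENat.lt_add_one_iff (ENat.natCast_ne_top n)]
  rw [hlevel]
  exact (hle n).diff (hle (n + 1))

theorem measurable_numComp_iSup_comap_le {Ω : Type*} (K : ℤ → Ω → ℕ)
    (hpos : ∀ n ω, 0 < K n ω) (m : ℤ) :
    Measurable[⨆ i : {i : ℤ // i ≤ m}, MeasurableSpace.comap (K i.1) inferInstance]
      fun ω => numComp fun n => K n ω := by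
  let past := ⨆ i : {i : ℤ // i ≤ m}, MeasurableSpace.comap (K i.1) inferInstance
  have htrunc : Measurable[past] fun ω n => if n ≤ m then K n ω else 1 := by
    refine measurable_pi_lambda _ fun n => ?_
    split_ifs with hn
    · exact (comap_measurable (K n)).mono (le_iSup (fun i : {i : ℤ // i ≤ m} =>
        MeasurableSpace.comap (K i.1) inferInstance) ⟨n, hn⟩) le_rfl
    · exact measurable_const
  convert measurable_numComp.comp htrunc using 1
  funext ω
  refine numComp_congr (hpos · ω) (fun n => ?_) m fun n hn => (if_pos hn).symm
  dsimp only
  split_ifs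
  exacts [hpos n ω, one_pos]

theorem exists_ae_eq_const_of_measurable_limsup_atBot {Ω ι β : Type*} {m0 : MeasurableSpace Ω}
    {μ : Measure Ω} [IsProbabilityMeasure μ] [SemilatticeInf ι] [NoMinOrder ι] [Nonempty ι]
    [MeasurableSpace β] [MeasurableSingletonClass β] [Countable β]
    {s : ι → MeasurableSpace Ω} (h_le : ∀ n, s n ≤ m0) (h_indep : iIndep s μ) {f : Ω → β}
    (hf : Measurable[limsup s atBot] f) : ∃ c, ∀ᵐ ω ∂μ, f ω = c := by
  have hf₀ : Measurable f := hf.mono (limsup_le_iSup.trans (iSup_le h_le)) le_rfl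
  obtain ⟨c, hc⟩ : ∃ c, μ (f ⁻¹' {c}) ≠ 0 := by
    by_contra! h
    have := measure_iUnion_null h
    rw [← Set.preimage_iUnion, Set.iUnion_of_singleton, Set.preimage_univ, measure_univ] at this
    exact one_ne_zero this
  refine ⟨c, (ae_iff_measure_eq (hf₀ (measurableSet_singleton c)).nullMeasurableSet).2 ?_⟩
  rw [measure_univ]
  exact (measure_zero_or_one_of_measurableSet_limsup_atBot h_le h_indep
    (hf (measurableSet_singleton c))).resolve_left hc

theorem tailSigma_eq_limsup {Ω : Type*} [MeasurableSpace Ω] (K : ℤ → Ω → ℕ) :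
    tailSigma K = limsup (fun i => MeasurableSpace.comap (K i) inferInstance) atBot := by
  rw [atBot_basis.limsup_eq_iInf_iSup, tailSigma]
  simp only [iInf_true, iSup_subtype']
  rfl

theorem numComponents_tail_measurable_and_as_constant_general
    {Ω : Type*} [MeasurableSpace Ω] (P : Measure Ω) [IsProbabilityMeasure P]
    (K : ℤ → Ω → ℕ) (hmeas : ∀ n, Measurable (K n)) (hpos : ∀ n ω, 0 < K n ω)
    (hindep : iIndepFun K P) :
    (@Measurable Ω ℕ∞ (tailSigma K) ⊤ fun ω => numComp fun n => K n ω) ∧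
      ∃ c : ℕ∞, ∀ᵐ ω ∂P, numComp (fun n => K n ω) = c := by
  have htail : Measurable[tailSigma K] fun ω => numComp fun n => K n ω := fun s hs =>
    MeasurableSpace.measurableSet_iInf.2 fun m => measurable_numComp_iSup_comap_le K hpos m hs
  refine ⟨htail, ?_⟩
  rw [tailSigma_eq_limsup] at htail
  exact exists_ae_eq_const_of_measurable_limsup_atBot (fun n => (hmeas n).comap_le) hindep htail

/-- For i.i.d. positive-integer-valued `{K n}`, the number of connected components of
the random graph on `ℤ` with edges `{n, n - K n}` is measurable with respect to the
left tail σ-algebra, and hence almost surely constant. -/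
theorem numComponents_tail_measurable_and_as_constant
    {Ω : Type*} [MeasurableSpace Ω] (P : Measure Ω) [IsProbabilityMeasure P]
    (K : ℤ → Ω → ℕ) (hmeas : ∀ n, Measurable (K n)) (hpos : ∀ n ω, 0 < K n ω)
    (hindep : iIndepFun K P)
    (hident : ∀ n : ℤ, P.map (K n) = P.map (K 0)) :
    (@Measurable Ω ℕ∞ (tailSigma K) ⊤ fun ω => numComp fun n => K n ω) ∧
      ∃ c : ℕ∞, ∀ᵐ ω ∂P, numComp (fun n => K n ω) = c :=
  numComponents_tail_measurable_and_as_constant_general P K hmeas hpos hindep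
end

section
/- Let {K_i}_{i≥1} be i.i.d. ℕ+-valued with gcd of the support equal to 1, and define the von Schelling process Y_0 = 1, Y_{n+1} = |Y_n − K_{n+1}|. Let N be the number of connected components of the random graph on ℤ with edges {i, i − K_i} (K_i i.i.d. copies). Then N = 1 almost surely if and only if the von Schelling process started at 1 is recurrent (equivalently, hits 0 almost surely from every state). -/
open MeasureTheory ProbabilityTheory

/-- The von Schelling process `Y 0 = y`, `Y (n+1) = |Y n - K (n+1)|`, driven by the
variables `K 1, K 2, …`. -/
def vonSchelling {Ω : Type*} (K : ℤ → Ω → ℕ) (ω : Ω) (y : ℕ) : ℕ → ℕ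
  | 0 => y
  | n + 1 => ((vonSchelling K ω y n : ℤ) - (K ((n : ℤ) + 1) ω : ℤ)).natAbs

/-!
Put two walkers at `t` and `t - y` and repeatedly move the upper one along its edge
`a ↦ a - K a` (both together once they have met). Their gap is the von Schelling process driven
by the values read, and the walkers meet iff `t` and `t - y` lie in one component: each move
follows an edge, and conversely, while the walkers are apart, the set of common ancestors of
their positions does not change, yet it lies below both walkers, which drift to `-∞`. The
upper walker strictly descends, so it never reads a site twice and the values it reads are
i.i.d. with the law of `K 0`, just like `K 1, K 2, …`. Hence `t ∼ t - y` almost surely iff the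
von Schelling process from `y` hits `0` almost surely; `y = 1` and all `t` give a single
component.
-/

open Relation

theorem MeasureTheory.Measure.ext_of_forall_prefix {α : Type*} [MeasurableSpace α]
    [Countable α] [MeasurableSingletonClass α] {μ ν : Measure (ℕ → α)} [IsFiniteMeasure μ]
    (h : ∀ (n : ℕ) (v : ℕ → α), μ {x | ∀ m < n, x m = v m} = ν {x | ∀ m < n, x m = v m}) :
    μ = ν := by
  have hcyl : ∀ s ∈ measurableCylinders (fun _ : ℕ => α), μ s = ν s := by
    intro s hs
    simp only [measurableCylinders_nat, Set.mem_iUnion, Set.mem_singleton_iff] at hs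
    obtain ⟨a, S, hS, rfl⟩ := hs
    have hres : Measurable (Finset.restrict (π := fun _ : ℕ => α) (Finset.Iic a)) :=
      Finset.measurable_restrict _
    suffices μ.map (Finset.Iic a).restrict = ν.map (Finset.Iic a).restrict by
      simpa [cylinder, Measure.map_apply hres hS] using congrArg (· S) this
    refine Measure.ext_of_singleton fun v => ?_
    have hpre : (Finset.Iic a).restrict ⁻¹' ({v} : Set (Finset.Iic a → α)) =
        {x | ∀ m < a + 1, x m = v ⟨min m a, by simp⟩} := by
      ext x
      simp only [Set.mem_preimage, Set.mem_singleton_iff, Set.mem_ofPred_eq, funext_iff,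
        Finset.restrict, Subtype.forall, Finset.mem_Iic]
      constructor
      · intro hx m hm
        simpa [Nat.min_eq_left (Nat.lt_succ_iff.1 hm)] using hx m (Nat.lt_succ_iff.1 hm)
      · intro hx m hm
        simpa [Nat.min_eq_left hm] using hx m (Nat.lt_succ_of_le hm)
    rw [Measure.map_apply hres (measurableSet_singleton v),
      Measure.map_apply hres (measurableSet_singleton v), hpre, h]
  have huniv : Set.univ ∈ measurableCylinders (fun _ : ℕ => α) :=
    (mem_measurableCylinders _).2 ⟨∅, Set.univ, MeasurableSet.univ, rfl⟩
  exact ext_of_generate_finite _ generateFrom_measurableCylinders.symm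
    isPiSystem_measurableCylinders hcyl (hcyl _ huniv)

theorem ProbabilityTheory.iIndepFun.measure_forall_lt_eq_prod {Ω ι β : Type*}
    [MeasurableSpace Ω] [MeasurableSpace β] [MeasurableSingletonClass β]
    {P : Measure Ω} {K : ι → Ω → β} {μ : Measure β} (hmeas : ∀ i, Measurable (K i))
    (hindep : iIndepFun K P) (hlaw : ∀ i, P.map (K i) = μ)
    {n : ℕ} {ρ : ℕ → ι} (hρ : Set.InjOn ρ (Set.Iio n)) (v : ℕ → β) :
    P {ω | ∀ m < n, K (ρ m) ω = v m} = ∏ m ∈ Finset.range n, μ {v m} := by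
  have hinj : Function.Injective fun i : Fin n => ρ i :=
    fun i j hij => Fin.ext (hρ i.isLt j.isLt hij)
  have h := (hindep.precomp hinj).measure_inter_preimage_eq_mul Finset.univ
    (sets := fun i => {v i}) fun _ _ => measurableSet_singleton _
  have hevent : {ω | ∀ m < n, K (ρ m) ω = v m} =
      ⋂ i ∈ (Finset.univ : Finset (Fin n)), K (ρ i) ⁻¹' {v i} := by
    ext ω; simp [Fin.forall_iff]
  rw [hevent, h, ← Fin.prod_univ_eq_prod_range (fun m => μ {v m})]
  refine Finset.prod_congr rfl fun i _ => ?_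
  rw [← hlaw (ρ i), Measure.map_apply (hmeas _) (measurableSet_singleton _)]

section Exploration

variable {σ : Type*} (next : ℕ → σ → σ) (site : σ → ℤ) (s₀ : σ)

def runWord (w : ℕ → ℕ) : ℕ → σ
  | 0 => s₀
  | m + 1 => next (w m) (runWord w m)

def explore (κ : ℤ → ℕ) : ℕ → σ
  | 0 => s₀
  | m + 1 => next (κ (site (explore κ m))) (explore κ m)

def readings (κ : ℤ → ℕ) (m : ℕ) : ℕ := κ (site (explore next site s₀ κ m))

variable {next s₀}

theorem runWord_congr {w w' : ℕ → ℕ} {n : ℕ} (h : ∀ m < n, w m = w' m) :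
    runWord next s₀ w n = runWord next s₀ w' n := by
  induction n with
  | zero => rfl
  | succ n ih =>
    simp only [runWord, ih fun m hm => h m (hm.trans n.lt_succ_self), h n n.lt_succ_self]

variable (next s₀) in
theorem explore_eq_runWord_readings (κ : ℤ → ℕ) :
    explore next site s₀ κ = runWord next s₀ (readings next site s₀ κ) := by
  funext m
  induction m with
  | zero => rfl
  | succ m ih => simp only [explore, runWord, readings, ih]

theorem forall_lt_readings_eq_iff {κ : ℤ → ℕ} {w : ℕ → ℕ} {n : ℕ} :
    (∀ m < n, readings next site s₀ κ m = w m) ↔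
      ∀ m < n, κ (site (runWord next s₀ w m)) = w m := by
  have key : ∀ m, (∀ j < m, readings next site s₀ κ j = w j) →
      readings next site s₀ κ m = κ (site (runWord next s₀ w m)) := fun m hm => by
    rw [readings, explore_eq_runWord_readings, runWord_congr hm]
  constructor
  · intro h m hm
    rw [← key m fun j hj => h j (hj.trans hm), h m hm]
  · intro h m
    induction m using Nat.strong_induction_on with
    | _ m ih => exact fun hm => (key m fun j hj => ih j hj (hj.trans hm)).trans (h m hm)

theorem injOn_site_runWord (hsite : ∀ k s, 0 < k → site (next k s) < site s)
    {w : ℕ → ℕ} {n : ℕ} (hw : ∀ m < n, 0 < w m) :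
    Set.InjOn (fun m => site (runWord next s₀ w m)) (Set.Iio n) :=
  (strictAntiOn_Iic_of_succ_lt (n := n) fun m hm => hsite _ _ (hw m hm)).injOn.mono
    Set.Iio_subset_Iic_self

variable [MeasurableSpace σ] [Countable σ] [MeasurableSingletonClass σ]
  {Ω : Type*} [MeasurableSpace Ω] {K : ℤ → Ω → ℕ}

theorem measurable_runWord (n : ℕ) : Measurable fun w : ℕ → ℕ => runWord next s₀ w n := by
  induction n with
  | zero => exact measurable_const
  | succ n ih =>
    exact (measurable_of_countable fun p : ℕ × σ => next p.1 p.2).comp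
      ((measurable_pi_apply n).prodMk ih)

theorem measurable_explore (hmeas : ∀ i, Measurable (K i)) (m : ℕ) :
    Measurable fun ω => explore next site s₀ (fun i => K i ω) m := by
  induction m with
  | zero => exact measurable_const
  | succ m ih =>
    have : Measurable fun p : Ω × σ => next (K (site p.2) p.1) p.2 :=
      measurable_from_prod_countable_left fun s =>
        (measurable_of_countable (next · s)).comp (hmeas (site s))
    exact this.comp (measurable_id.prodMk ih)

theorem measurable_readings (hmeas : ∀ i, Measurable (K i)) :
    Measurable fun ω => readings next site s₀ (fun i => K i ω) := by
  refine measurable_pi_lambda _ fun m => ?_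
  have : Measurable fun p : Ω × σ => K (site p.2) p.1 :=
    measurable_from_prod_countable_left fun s => hmeas (site s)
  exact this.comp (measurable_id.prodMk (measurable_explore site hmeas m))

variable {P : Measure Ω} [IsFiniteMeasure P] {μ : Measure ℕ}

variable (next s₀) in
theorem identDistrib_readings (hmeas : ∀ i, Measurable (K i)) (hpos : ∀ i ω, 0 < K i ω)
    (hindep : iIndepFun K P) (hlaw : ∀ i, P.map (K i) = μ)
    (hsite : ∀ k s, 0 < k → site (next k s) < site s) {ρ : ℕ → ℤ} (hρ : ρ.Injective) :
    IdentDistrib (fun ω => readings next site s₀ (fun i => K i ω)) (fun ω m => K (ρ m) ω) P P where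
  aemeasurable_fst := (measurable_readings site hmeas).aemeasurable
  aemeasurable_snd := (measurable_pi_lambda _ fun m => hmeas (ρ m)).aemeasurable
  map_eq := by
    refine Measure.ext_of_forall_prefix fun n v => ?_
    have hprefix : MeasurableSet {x : ℕ → ℕ | ∀ m < n, x m = v m} := by measurability
    rw [Measure.map_apply (measurable_readings site hmeas) hprefix,
      Measure.map_apply (measurable_pi_lambda _ fun m => hmeas (ρ m)) hprefix]
    -- on the event that the first `n` readings are `v`, the sites read are those of
    -- `runWord next s₀ v`, which are distinct when `v` is positive
    simp only [Set.preimage_ofPred_eq, forall_lt_readings_eq_iff]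
    rw [hindep.measure_forall_lt_eq_prod hmeas hlaw hρ.injOn v]
    by_cases hv : ∀ m < n, 0 < v m
    · exact hindep.measure_forall_lt_eq_prod hmeas hlaw (injOn_site_runWord site hsite hv) v
    · obtain ⟨m, hm, hvm⟩ : ∃ m < n, v m = 0 := by simpa using hv
      have hempty : {ω | ∀ j < n, K (site (runWord next s₀ v j)) ω = v j} = ∅ :=
        Set.eq_empty_of_forall_notMem fun ω hω => (hpos _ ω).ne' ((hω m hm).trans hvm)
      have hμ : μ {v m} = 0 := by
        rw [← hlaw 0, Measure.map_apply (hmeas 0) (measurableSet_singleton _)]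
        exact measure_mono_null (fun ω hω => (hpos 0 ω).ne' (hω.trans hvm)) measure_empty
      rw [hempty, measure_empty, Finset.prod_eq_zero (Finset.mem_range.2 hm) hμ]

end Exploration

section Ancestors

variable (κ : ℤ → ℕ)

def parent (a : ℤ) : ℤ := a - κ a

def ancestors (a : ℤ) : Set ℤ := Set.range fun n => (parent κ)^[n] a

variable {κ}

theorem eqvGen_parent_left_iff {a b : ℤ} :
    EqvGen (graphRel κ) (parent κ a) b ↔ EqvGen (graphRel κ) a b :=
  have hedge : EqvGen (graphRel κ) a (parent κ a) := .rel _ _ rfl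
  ⟨hedge.trans _ _ _, hedge.symm.trans _ _ _⟩

theorem iterate_mem_ancestors (a : ℤ) (n : ℕ) : (parent κ)^[n] a ∈ ancestors κ a := ⟨n, rfl⟩

theorem ancestors_subset_of_mem {a b : ℤ} (h : b ∈ ancestors κ a) :
    ancestors κ b ⊆ ancestors κ a := by
  rintro _ ⟨n, rfl⟩
  obtain ⟨m, rfl⟩ := h
  exact ⟨n + m, Function.iterate_add_apply _ _ _ _⟩

theorem ancestors_eq_insert (a : ℤ) : ancestors κ a = insert a (ancestors κ (parent κ a)) := by
  ext b
  constructor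
  · rintro ⟨_ | n, rfl⟩
    · exact Set.mem_insert _ _
    · exact Set.mem_insert_of_mem _ ⟨n, (Function.iterate_succ_apply _ _ _).symm⟩
  · rintro (rfl | ⟨n, rfl⟩)
    · exact ⟨0, rfl⟩
    · exact ⟨n + 1, Function.iterate_succ_apply _ _ _⟩

theorem Relation.EqvGen.ancestors_inter_nonempty {a b : ℤ} (h : EqvGen (graphRel κ) a b) :
    (ancestors κ a ∩ ancestors κ b).Nonempty := by
  induction h with
  | rel a b hab => exact ⟨b, ⟨1, hab.symm⟩, ⟨0, rfl⟩⟩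
  | refl a => exact ⟨a, ⟨0, rfl⟩, ⟨0, rfl⟩⟩
  | symm a b _ ih => exact Set.inter_comm _ _ ▸ ih
  | trans a b c _ _ ihab ihbc =>
    obtain ⟨x, hxa, i, rfl⟩ := ihab
    obtain ⟨z, ⟨j, rfl⟩, hzc⟩ := ihbc
    refine ⟨(parent κ)^[j + i] b, ancestors_subset_of_mem hxa ?_,
      ancestors_subset_of_mem hzc ?_⟩
    · rw [Function.iterate_add_apply]; exact iterate_mem_ancestors _ j
    · rw [add_comm, Function.iterate_add_apply]; exact iterate_mem_ancestors _ i

variable (hκ : ∀ a, 0 < κ a)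
include hκ

theorem parent_lt (a : ℤ) : parent κ a < a := by
  have := hκ a; unfold parent; omega

theorem ancestors_subset_Iic (a : ℤ) : ancestors κ a ⊆ Set.Iic a := by
  rintro _ ⟨n, rfl⟩
  exact antitone_nat_of_succ_le (f := fun n => (parent κ)^[n] a)
    (fun n => by simpa [Function.iterate_succ_apply'] using (parent_lt hκ _).le) n.zero_le

theorem ancestors_parent_inter_of_lt {a b : ℤ} (hba : b < a) :
    ancestors κ (parent κ a) ∩ ancestors κ b = ancestors κ a ∩ ancestors κ b := by
  have ha : a ∉ ancestors κ b := fun h => hba.not_ge (ancestors_subset_Iic hκ b h)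
  rw [ancestors_eq_insert a, Set.insert_inter_of_notMem ha]

end Ancestors

theorem numComp_eq_one_iff (κ : ℤ → ℕ) : numComp κ = 1 ↔ ∀ a b, EqvGen (graphRel κ) a b := by
  rw [numComp, Cardinal.toENat_eq_one, Cardinal.eq_one_iff_unique, Quot.subsingleton_iff,
    (EqvGen.is_equivalence _).eqvGen_eq, and_iff_left ⟨Quot.mk _ 0⟩]
  simp [funext_iff]

theorem Int.forall_rel_of_rel_sub_one {r : ℤ → ℤ → Prop} (hr : Equivalence r)
    (h : ∀ a, r a (a - 1)) (a b : ℤ) : r a b := by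
  suffices ∀ b, r 0 b from hr.trans (hr.symm (this a)) (this b)
  intro b
  induction b using Int.induction_on with
  | zero => exact hr.refl 0
  | succ k ih => exact hr.trans ih (hr.symm (by simpa using h (k + 1)))
  | pred k ih => exact hr.trans ih (h _)

def vonSchellingStep (k d : ℕ) : ℕ := ((d : ℤ) - k).natAbs

/-- Two walkers on `ℤ`: `s.1` is the position of the upper one and `s.2` the gap down to the
lower one. Reading `k`, the upper walker jumps down by `k`; once they have met, they move
together. -/
def pairStep (k : ℕ) (s : ℤ × ℕ) : ℤ × ℕ :=
  if s.2 = 0 then (s.1 - k, 0) else (s.1 - min (s.2 : ℤ) k, vonSchellingStep k s.2)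

theorem pairStep_fst_lt {k : ℕ} (hk : 0 < k) (s : ℤ × ℕ) : (pairStep k s).1 < s.1 := by
  unfold pairStep
  split_ifs <;> simp only [sub_lt_self_iff, lt_min_iff] <;> omega

theorem pairStep_positions (k : ℕ) {s : ℤ × ℕ} (hs : s.2 ≠ 0) :
    ((pairStep k s).1 = s.1 - k ∧ (pairStep k s).1 - (pairStep k s).2 = s.1 - s.2) ∨
      ((pairStep k s).1 = s.1 - s.2 ∧ (pairStep k s).1 - (pairStep k s).2 = s.1 - k) := by
  simp only [pairStep, vonSchellingStep, if_neg hs]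
  omega

theorem exists_runWord_pairStep_snd_eq_zero_iff (t : ℤ) (y : ℕ) (w : ℕ → ℕ) :
    (∃ n, (runWord pairStep (t, y) w n).2 = 0) ↔ ∃ n, runWord vonSchellingStep y w n = 0 := by
  have hagree : ∀ n, (∀ m < n, (runWord pairStep (t, y) w m).2 ≠ 0) →
      (runWord pairStep (t, y) w n).2 = runWord vonSchellingStep y w n := by
    intro n
    induction n with
    | zero => exact fun _ => rfl
    | succ n ih =>
      intro h
      rw [runWord, runWord, pairStep, if_neg (h n n.lt_succ_self),
        ih fun m hm => h m (hm.trans n.lt_succ_self)]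
  classical
  constructor
  · intro h
    exact ⟨Nat.find h, (hagree _ fun m hm => Nat.find_min h hm).symm.trans (Nat.find_spec h)⟩
  · rintro ⟨n, hn⟩
    by_contra! h
    exact h n ((hagree n fun m _ => h m).trans hn)

section PairProcess

variable {κ : ℤ → ℕ}

theorem eqvGen_pairStep_iff (s : ℤ × ℕ) :
    EqvGen (graphRel κ) (pairStep (κ s.1) s).1
        ((pairStep (κ s.1) s).1 - (pairStep (κ s.1) s).2) ↔
      EqvGen (graphRel κ) s.1 (s.1 - s.2) := by
  by_cases hs : s.2 = 0
  · simp [pairStep, hs, EqvGen.refl]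
  rcases pairStep_positions (κ s.1) hs with ⟨h1, h2⟩ | ⟨h1, h2⟩
  · rw [h2, h1]
    exact eqvGen_parent_left_iff
  · rw [h2, h1]
    have heqv := EqvGen.is_equivalence (graphRel κ)
    exact ⟨fun h => eqvGen_parent_left_iff.1 (heqv.symm h),
      fun h => heqv.symm (eqvGen_parent_left_iff.2 h)⟩

theorem ancestors_pairStep_inter (hκ : ∀ a, 0 < κ a) {s : ℤ × ℕ} (hs : s.2 ≠ 0) :
    ancestors κ (pairStep (κ s.1) s).1 ∩
        ancestors κ ((pairStep (κ s.1) s).1 - (pairStep (κ s.1) s).2) =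
      ancestors κ s.1 ∩ ancestors κ (s.1 - s.2) := by
  have hlower : s.1 - s.2 < s.1 := by omega
  rcases pairStep_positions (κ s.1) hs with ⟨h1, h2⟩ | ⟨h1, h2⟩
  · rw [h2, h1]
    exact ancestors_parent_inter_of_lt hκ hlower
  · rw [h2, h1, Set.inter_comm]
    exact ancestors_parent_inter_of_lt hκ hlower

theorem eqvGen_iff_exists_explore_pairStep_snd_eq_zero (hκ : ∀ a, 0 < κ a) (t : ℤ) (y : ℕ) :
    EqvGen (graphRel κ) t (t - y) ↔ ∃ n, (explore pairStep Prod.fst (t, y) κ n).2 = 0 := by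
  set x := explore pairStep Prod.fst (t, y) κ
  constructor
  · intro h
    obtain ⟨c, hct, hcy⟩ := h.ancestors_inter_nonempty
    by_contra! hne
    have hinter : ∀ n, ancestors κ (x n).1 ∩ ancestors κ ((x n).1 - (x n).2) =
        ancestors κ t ∩ ancestors κ (t - y) := by
      intro n
      induction n with
      | zero => rfl
      | succ n ih => exact (ancestors_pairStep_inter hκ (hne n)).trans ih
    have hfst : ∀ n : ℕ, (x n).1 ≤ t - n := by
      intro n
      induction n with
      | zero => simp [x, explore]
      | succ n ih =>
        have hstep : x (n + 1) = pairStep (κ (x n).1) (x n) := rfl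
        have := pairStep_fst_lt (hκ (x n).1) (x n)
        rw [hstep]
        omega
    set n := (t - c + 1).toNat
    have hmem : c ∈ ancestors κ (x n).1 ∩ ancestors κ ((x n).1 - (x n).2) := by
      rw [hinter n]; exact ⟨hct, hcy⟩
    have hc : c ≤ (x n).1 - (x n).2 := ancestors_subset_Iic hκ _ hmem.2
    have := hfst n
    omega
  · rintro ⟨n, hn⟩
    have hinv : ∀ n, EqvGen (graphRel κ) (x n).1 ((x n).1 - (x n).2) ↔
        EqvGen (graphRel κ) t (t - y) := by
      intro n
      induction n with
      | zero => rfl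
      | succ n ih => exact (eqvGen_pairStep_iff (x n)).trans ih
    exact (hinv n).1 (by rw [hn, Nat.cast_zero, sub_zero]; exact .refl _)

end PairProcess

theorem vonSchelling_eq_runWord {Ω : Type*} (K : ℤ → Ω → ℕ) (ω : Ω) (y : ℕ) :
    vonSchelling K ω y = runWord vonSchellingStep y fun m => K ((m : ℤ) + 1) ω := by
  funext n
  induction n with
  | zero => rfl
  | succ n ih => rw [vonSchelling, runWord, ih, vonSchellingStep]

theorem ae_eqvGen_iff_ae_exists_vonSchelling_eq_zero {Ω : Type*} [MeasurableSpace Ω]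
    {P : Measure Ω} [IsFiniteMeasure P] {K : ℤ → Ω → ℕ} {μ : Measure ℕ}
    (hmeas : ∀ i, Measurable (K i)) (hpos : ∀ i ω, 0 < K i ω) (hindep : iIndepFun K P)
    (hlaw : ∀ i, P.map (K i) = μ) (t : ℤ) (y : ℕ) :
    (∀ᵐ ω ∂P, EqvGen (graphRel fun i => K i ω) t (t - y)) ↔
      ∀ᵐ ω ∂P, ∃ n, vonSchelling K ω y n = 0 := by
  set H := {w : ℕ → ℕ | ∃ n, runWord vonSchellingStep y w n = 0}
  have hH : MeasurableSet H := by
    simp only [H, Set.ofPred_exists]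
    exact .iUnion fun n => measurable_runWord n (measurableSet_singleton 0)
  have hid := identDistrib_readings pairStep Prod.fst (t, y) hmeas hpos hindep hlaw
    (fun _ s hk => pairStep_fst_lt hk s) (ρ := fun m : ℕ => (m : ℤ) + 1)
    fun a b hab => by simpa using hab
  have hgraph : ∀ ω, EqvGen (graphRel fun i => K i ω) t (t - y) ↔
      readings pairStep Prod.fst (t, y) (fun i => K i ω) ∈ H := fun ω => by
    rw [eqvGen_iff_exists_explore_pairStep_snd_eq_zero (hpos · ω), explore_eq_runWord_readings]
    exact exists_runWord_pairStep_snd_eq_zero_iff t y _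
  have hvon : ∀ ω, (∃ n, vonSchelling K ω y n = 0) ↔ (fun m : ℕ => K ((m : ℤ) + 1) ω) ∈ H :=
    fun ω => by rw [vonSchelling_eq_runWord]; rfl
  simp only [hgraph, hvon]
  exact ⟨hid.ae_mem_snd hH, hid.symm.ae_mem_snd hH⟩

theorem one_component_iff_vonSchelling_recurrent_general
    {Ω : Type*} [MeasurableSpace Ω] (P : Measure Ω) [IsProbabilityMeasure P]
    (K : ℤ → Ω → ℕ) (hmeas : ∀ n, Measurable (K n)) (hpos : ∀ n ω, 0 < K n ω)
    (hindep : iIndepFun K P)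
    (hident : ∀ n : ℤ, P.map (K n) = P.map (K 0)) :
    (∀ᵐ ω ∂P, numComp (fun n => K n ω) = 1) ↔
      ∀ y : ℕ, ∀ᵐ ω ∂P, ∃ n : ℕ, vonSchelling K ω y n = 0 := by
  have hconn := ae_eqvGen_iff_ae_exists_vonSchelling_eq_zero hmeas hpos hindep hident
  simp only [numComp_eq_one_iff]
  constructor
  · exact fun h y => (hconn 0 y).1 (h.mono fun ω hω => hω _ _)
  · intro h
    filter_upwards [ae_all_iff.2 fun a => (hconn a 1).2 (h 1)] with ω hω
    exact Int.forall_rel_of_rel_sub_one (EqvGen.is_equivalence _) (by simpa using hω)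

/-- For i.i.d. `{K i}` with gcd of the support equal to `1`, the random graph on `ℤ`
with edges `{i, i - K i}` has a single connected component almost surely if and only if
the von Schelling process is recurrent, i.e. hits `0` almost surely from every state. -/
theorem one_component_iff_vonSchelling_recurrent
    {Ω : Type*} [MeasurableSpace Ω] (P : Measure Ω) [IsProbabilityMeasure P]
    (K : ℤ → Ω → ℕ) (hmeas : ∀ n, Measurable (K n)) (hpos : ∀ n ω, 0 < K n ω)
    (hindep : iIndepFun K P)
    (hident : ∀ n : ℤ, P.map (K n) = P.map (K 0))
    (hgcd : ∀ d : ℕ, (∀ k : ℕ, P {ω | K 0 ω = k} ≠ 0 → d ∣ k) → d = 1) :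
    (∀ᵐ ω ∂P, numComp (fun n => K n ω) = 1) ↔
      ∀ y : ℕ, ∀ᵐ ω ∂P, ∃ n : ℕ, vonSchelling K ω y n = 0 :=
  one_component_iff_vonSchelling_recurrent_general P K hmeas hpos hindep hident
end
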